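/- Let X_0,…,X_N be independent Poisson random variables with rates h_x ≥ 0, and for each edge x ∈ {0,…,N-1} define the event A_x = {Σ_{y≤x} X_y is even}. Let t_0,…,t_{N-1} ∈ [0,1] and define f_x = 1_{A_x} + t_x·1_{A_x^c}. Then, conditionally on {Σ_{y=0}^N X_y even}, E[ ∏_x f_x | Σ X_y even ] ≥ ∏_x E[ f_x | Σ X_y even ] ≥ ∏_x (1+t_x)/2. -/

import Mathlib

/-!
Write `χ_c X = (-1) ^ ∑ y, c y * X y`. Each `f_x` equals `(1 + t_x)/2 + (1 - t_x)/2 · χ_{c_x}` with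
`c_x` the indicator of `{y ≤ x}`, a nonnegative combination of characters. For independent Poisson
variables `E[χ_c] = ∏_{c_y odd} e^{-2 h_y}`, and since `1_{∑ X even} = (1 + χ_1)/2` the restricted
character sums `ν(c) = E[χ_c; ∑ X even]` are explicit and satisfy Griffiths' inequality
`ν(b) ν(c) ≤ ν(b + c) ν(0)`. Expanding the product of the `f_x` one factor at a time propagates
this to the positive correlation `E[f_x ∏_F f | even] ≥ E[f_x | even] E[∏_F f | even]` for
`x ∉ F`, which gives the first inequality by induction; the second is `ν(c_x) ≥ 0`.
-/

open Finset

/-- Total number of arrivals of the lattice current `nL` at the vertex `v` of `{0, …, N}`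
(edge `x` joins vertices `x` and `x+1`). -/
def touch (N : ℕ) (nL : Fin N → ℕ) (v : Fin (N + 1)) : ℕ :=
  ∑ x : Fin N, if v = x.castSucc ∨ v = x.succ then nL x else 0

/-- The sum of the ghost current over the vertices to the left of the edge `x`
(i.e. over vertices `y ≤ x`). -/
def lsum (N : ℕ) (ng : Fin (N + 1) → ℕ) (x : Fin N) : ℕ :=
  ∑ y : Fin (N + 1), if (y : ℕ) ≤ (x : ℕ) then ng y else 0

/-- The sum of the ghost current over the vertices to the right of the edge `x`
(i.e. over vertices `y ≥ x + 1`). -/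
def rsum (N : ℕ) (ng : Fin (N + 1) → ℕ) (x : Fin N) : ℕ :=
  ∑ y : Fin (N + 1), if (x : ℕ) + 1 ≤ (y : ℕ) then ng y else 0

/-- The Poisson probability mass function with rate `r`. -/
noncomputable def poisPMF (r : ℝ) (k : ℕ) : ℝ := Real.exp (-r) * r ^ k / (Nat.factorial k)

/-- Conditional Gibbs/Poisson expectation of `g` given the event `B`,
under the product Poisson measure with rates `h`. -/
noncomputable def condE (N : ℕ) (h : Fin (N + 1) → ℝ)
    (B : (Fin (N + 1) → ℕ) → Prop) [DecidablePred B]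
    (g : (Fin (N + 1) → ℕ) → ℝ) : ℝ :=
  (∑' X : Fin (N + 1) → ℕ, if B X then g X * ∏ x, poisPMF (h x) (X x) else 0) /
    (∑' X : Fin (N + 1) → ℕ, if B X then ∏ x, poisPMF (h x) (X x) else 0)

theorem hasSum_pi_prod {ι α : Type*} [Fintype ι] {f : ι → α → ℝ} {s : ι → ℝ}
    (hf : ∀ i, HasSum (f i) (s i)) : HasSum (fun x : ι → α => ∏ i, f i (x i)) (∏ i, s i) := by
  classical
  have hbox : Filter.Tendsto (fun T : Finset α => Fintype.piFinset fun _ : ι => T)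
      Filter.atTop Filter.atTop := by
    refine Filter.tendsto_atTop_atTop_of_monotone
      (fun T T' hT => Fintype.piFinset_subset _ _ fun _ => hT)
      fun S => ⟨univ.biUnion fun i => S.image (· i), fun x hx => ?_⟩
    exact Fintype.mem_piFinset.2 fun i => mem_biUnion.2 ⟨i, mem_univ _, mem_image_of_mem _ hx⟩
  have hsum : Summable fun x : ι → α => ∏ i, f i (x i) := by
    refine Summable.of_norm_bounded (g := fun x => ∏ i, ‖f i (x i)‖) ?_ fun x => by
      rw [norm_prod]
    refine summable_of_sum_le (fun x => by positivity) (c := ∏ i, ∑' a, ‖f i a‖) fun S => ?_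
    obtain ⟨T, hT⟩ := Filter.tendsto_atTop_atTop.1 hbox S
    calc ∑ x ∈ S, ∏ i, ‖f i (x i)‖ ≤ ∑ x ∈ Fintype.piFinset fun _ => T, ∏ i, ‖f i (x i)‖ :=
          sum_le_sum_of_subset_of_nonneg (hT T le_rfl) fun _ _ _ => by positivity
      _ = ∏ i, ∑ a ∈ T, ‖f i a‖ := (prod_univ_sum (fun _ => T) fun i a => ‖f i a‖).symm
      _ ≤ ∏ i, ∑' a, ‖f i a‖ := prod_le_prod (fun _ _ => by positivity)
          fun i _ => (hf i).summable.norm.sum_le_tsum T fun _ _ => norm_nonneg _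
  have hlim : Filter.Tendsto (fun T : Finset α => ∏ i, ∑ a ∈ T, f i a) Filter.atTop
      (nhds (∏ i, s i)) := tendsto_finsetProd _ fun i _ => hf i
  convert hsum.hasSum
  refine tendsto_nhds_unique hlim ?_
  simp_rw [prod_univ_sum]
  exact hsum.hasSum.comp hbox

theorem hasSum_pow_mul_poisPMF (r s : ℝ) :
    HasSum (fun k => s ^ k * poisPMF r k) (Real.exp ((s - 1) * r)) := by
  have h := (NormedSpace.expSeries_div_hasSum_exp (s * r)).mul_left (Real.exp (-r))
  rw [← Real.exp_eq_exp_ℝ, ← Real.exp_add, show -r + s * r = (s - 1) * r by ring] at h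
  refine h.congr_fun fun k => ?_
  simp only [poisPMF, mul_pow]
  ring

theorem four_var_griffiths {p q r w : ℝ} (hp₀ : 0 ≤ p) (hp₁ : p ≤ 1) (hq₀ : 0 ≤ q) (hq₁ : q ≤ 1)
    (hr₀ : 0 ≤ r) (hr₁ : r ≤ 1) (hw₀ : 0 ≤ w) (hw₁ : w ≤ 1) :
    (p * q + r * w) * (p * r + q * w) ≤ (q * r + p * w) * (1 + p * q * r * w) := by
  have hsq : ∀ x : ℝ, 0 ≤ x → x ≤ 1 → 0 ≤ 1 - x ^ 2 := fun x h₀ h₁ => by nlinarith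
  have := add_nonneg
    (mul_nonneg (mul_nonneg (mul_nonneg hq₀ hr₀) (hsq p hp₀ hp₁)) (hsq w hw₀ hw₁))
    (mul_nonneg (mul_nonneg (mul_nonneg hp₀ hw₀) (hsq q hq₀ hq₁)) (hsq r hr₀ hr₁))
  linear_combination this

namespace PoissonParity

section Griffiths

variable {ι : Type*} [Fintype ι] (a : ι → ℝ)

def parityProd (c : ι → ℕ) : ℝ := ∏ y, if Even (c y) then 1 else a y

noncomputable def evenParityProd (c : ι → ℕ) : ℝ := (parityProd a c + parityProd a (c + 1)) / 2

variable {a}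

theorem parityProd_nonneg (ha₀ : ∀ y, 0 ≤ a y) (c : ι → ℕ) : 0 ≤ parityProd a c :=
  prod_nonneg fun y _ => by split_ifs <;> simp [ha₀ y]

theorem evenParityProd_nonneg (ha₀ : ∀ y, 0 ≤ a y) (c : ι → ℕ) : 0 ≤ evenParityProd a c :=
  div_nonneg (add_nonneg (parityProd_nonneg ha₀ c) (parityProd_nonneg ha₀ (c + 1))) zero_le_two

theorem evenParityProd_zero_pos (ha₀ : ∀ y, 0 ≤ a y) : 0 < evenParityProd a 0 := by
  have h₀ : parityProd a 0 = 1 := prod_eq_one fun y _ => by simp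
  rw [evenParityProd, h₀]
  have := parityProd_nonneg ha₀ (0 + 1)
  positivity

theorem parityProd_eq_prod_fiber {K : Type*} [Fintype K] [DecidableEq K] (κ : ι → K)
    (φ : K → Prop) [DecidablePred φ] {u : ι → ℕ} (hu : ∀ y, Even (u y) ↔ φ (κ y)) :
    parityProd a u = ∏ k, if φ k then 1 else ∏ y with κ y = k, a y := by
  rw [parityProd, ← prod_fiberwise univ κ]
  refine prod_congr rfl fun k _ => ?_
  split_ifs with hk
  · exact prod_eq_one fun y hy => by rw [if_pos ((hu y).2 ((mem_filter.1 hy).2 ▸ hk))]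
  · exact prod_congr rfl fun y hy => by rw [if_neg fun h => hk ((mem_filter.1 hy).2 ▸ (hu y).1 h)]

/-- A Griffiths (GKS II) inequality. Grouping the sites by the parities of `b y` and `c y` reduces
it to `four_var_griffiths` for the four class products. -/
theorem evenParityProd_mul_le (ha₀ : ∀ y, 0 ≤ a y) (ha₁ : ∀ y, a y ≤ 1) (b c : ι → ℕ) :
    evenParityProd a b * evenParityProd a c ≤ evenParityProd a (b + c) * evenParityProd a 0 := by
  set κ : ι → Bool × Bool := fun y => (decide (Even (b y)), decide (Even (c y)))
  set P : Bool × Bool → ℝ := fun k => ∏ y with κ y = k, a y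
  have hP : ∀ k, 0 ≤ P k ∧ P k ≤ 1 := fun k =>
    ⟨prod_nonneg fun y _ => ha₀ y, prod_le_one (fun y _ => ha₀ y) fun y _ => ha₁ y⟩
  have hfib : ∀ (u : ι → ℕ) (φ : Bool → Bool → Bool),
      (∀ y, Even (u y) ↔ φ (κ y).1 (κ y).2) →
      parityProd a u = ∏ k : Bool × Bool, if φ k.1 k.2 then 1 else P k :=
    fun u φ hu => parityProd_eq_prod_fiber κ (fun k => φ k.1 k.2) hu
  simp only [evenParityProd,
    hfib b (fun β _ => β) (by simp [κ]),
    hfib (b + 1) (fun β _ => !β) (by simp [κ, Nat.even_add_one]),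
    hfib c (fun _ γ => γ) (by simp [κ]),
    hfib (c + 1) (fun _ γ => !γ) (by simp [κ, Nat.even_add_one]),
    hfib (b + c) (fun β γ => β == γ) (by simp [κ, Nat.even_add]),
    hfib (b + c + 1) (fun β γ => !(β == γ)) (by simp [κ, Nat.even_add, Nat.even_add_one]),
    hfib 0 (fun _ _ => true) (by simp),
    hfib (0 + 1) (fun _ _ => false) (by simp),
    Fintype.prod_prod_type, Fintype.prod_bool, Bool.false_eq_true, Bool.not_true, Bool.not_false,
    Bool.true_beq, Bool.false_beq, ↓reduceIte, one_mul, mul_one]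
  linear_combination (four_var_griffiths (hP (false, false)).1 (hP (false, false)).2
    (hP (false, true)).1 (hP (false, true)).2 (hP (true, false)).1 (hP (true, false)).2
    (hP (true, true)).1 (hP (true, true)).2) / 4

end Griffiths

section Poisson

variable {ι : Type*} [Fintype ι]

def parityChar (c X : ι → ℕ) : ℝ := (-1) ^ ∑ y, c y * X y

theorem parityChar_add (b c X : ι → ℕ) :
    parityChar (b + c) X = parityChar b X * parityChar c X := by
  simp only [parityChar, Pi.add_apply, add_mul, sum_add_distrib, pow_add]

theorem parityChar_zero : parityChar (0 : ι → ℕ) = 1 := by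
  ext X
  simp [parityChar]

theorem abs_parityChar (c X : ι → ℕ) : |parityChar c X| = 1 := by
  simp [parityChar]

variable (h : ι → ℝ)

noncomputable def poisWeight (X : ι → ℕ) : ℝ := ∏ y, poisPMF (h y) (X y)

noncomputable def evenSum (g : (ι → ℕ) → ℝ) : ℝ :=
  ∑' X, if Even (∑ y, X y) then g X * poisWeight h X else 0

noncomputable def evenCondExp (g : (ι → ℕ) → ℝ) : ℝ := evenSum h g / evenSum h 1

theorem hasSum_parityChar_mul_poisWeight (c : ι → ℕ) :
    HasSum (fun X => parityChar c X * poisWeight h X)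
      (parityProd (fun y => Real.exp (-(2 * h y))) c) := by
  have hprod : (fun X => parityChar c X * poisWeight h X) =
      fun X => ∏ y, ((-1 : ℝ) ^ c y) ^ X y * poisPMF (h y) (X y) := by
    ext X
    simp only [parityChar, poisWeight, prod_mul_distrib, ← prod_pow_eq_pow_sum, ← pow_mul]
  rw [hprod]
  convert hasSum_pi_prod fun y => hasSum_pow_mul_poisPMF (h y) ((-1) ^ c y) using 1
  refine prod_congr rfl fun y _ => ?_
  rcases Nat.even_or_odd (c y) with hc | hc
  · simp [hc, hc.neg_one_pow]
  · simp only [hc.neg_one_pow, Nat.not_even_iff_odd.2 hc, ↓reduceIte]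
    ring_nf

/-- The indicator of `{∑ X even}` is `(1 + parityChar 1) / 2`. -/
theorem hasSum_even_parityChar_mul_poisWeight (c : ι → ℕ) :
    HasSum (fun X => if Even (∑ y, X y) then parityChar c X * poisWeight h X else 0)
      (evenParityProd (fun y => Real.exp (-(2 * h y))) c) := by
  refine ((hasSum_parityChar_mul_poisWeight h c).add
    (hasSum_parityChar_mul_poisWeight h (c + 1))).div_const 2 |>.congr_fun fun X => ?_
  have h₁ : parityChar (1 : ι → ℕ) X = (-1) ^ ∑ y, X y := by simp [parityChar]
  rw [parityChar_add, h₁]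
  split_ifs with hX
  · rw [hX.neg_one_pow]; ring
  · rw [(Nat.not_even_iff_odd.1 hX).neg_one_pow]; ring

theorem evenSum_parityChar (c : ι → ℕ) :
    evenSum h (parityChar c) = evenParityProd (fun y => Real.exp (-(2 * h y))) c :=
  (hasSum_even_parityChar_mul_poisWeight h c).tsum_eq

theorem evenSum_one_pos : 0 < evenSum h 1 := by
  rw [← parityChar_zero, evenSum_parityChar]
  exact evenParityProd_zero_pos fun y => (Real.exp_pos _).le

theorem evenSum_parityChar_nonneg (c : ι → ℕ) : 0 ≤ evenSum h (parityChar c) := by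
  rw [evenSum_parityChar]
  exact evenParityProd_nonneg (fun y => (Real.exp_pos (-(2 * h y))).le) c

theorem evenSum_parityChar_mul_le (hh : ∀ y, 0 ≤ h y) (b c : ι → ℕ) :
    evenSum h (parityChar b) * evenSum h (parityChar c) ≤
      evenSum h (parityChar (b + c)) * evenSum h 1 := by
  rw [← parityChar_zero]
  simp only [evenSum_parityChar]
  exact evenParityProd_mul_le (fun y => (Real.exp_pos _).le)
    (fun y => Real.exp_le_one_iff.2 (by linarith [hh y])) b c

theorem summable_even_mul_poisWeight {g : (ι → ℕ) → ℝ} (hg : ∀ X, |g X| ≤ 1) :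
    Summable fun X => if Even (∑ y, X y) then g X * poisWeight h X else 0 := by
  have hw : Summable (poisWeight h) := by
    simpa [parityChar_zero] using (hasSum_parityChar_mul_poisWeight h 0).summable
  refine Summable.of_norm_bounded hw.abs fun X => ?_
  split_ifs
  · rw [Real.norm_eq_abs, abs_mul]
    exact mul_le_of_le_one_left (abs_nonneg _) (hg X)
  · simp

theorem evenSum_add {g₁ g₂ : (ι → ℕ) → ℝ} (hg₁ : ∀ X, |g₁ X| ≤ 1) (hg₂ : ∀ X, |g₂ X| ≤ 1)
    (α β : ℝ) :
    evenSum h (fun X => α * g₁ X + β * g₂ X) = α * evenSum h g₁ + β * evenSum h g₂ := by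
  rw [evenSum, evenSum, evenSum, ← tsum_mul_left, ← tsum_mul_left,
    ← ((summable_even_mul_poisWeight h hg₁).mul_left α).tsum_add
      ((summable_even_mul_poisWeight h hg₂).mul_left β)]
  refine tsum_congr fun X => ?_
  split_ifs <;> ring

end Poisson

section SoftParity

variable {ι : Type*} [Fintype ι] (h : ι → ℝ)

def softParity (τ : ℝ) (c X : ι → ℕ) : ℝ := if Even (∑ y, c y * X y) then 1 else τ

theorem softParity_eq (τ : ℝ) (c X : ι → ℕ) :
    softParity τ c X = (1 + τ) / 2 + (1 - τ) / 2 * parityChar c X := by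
  unfold softParity parityChar
  split_ifs with hc
  · rw [hc.neg_one_pow]; ring
  · rw [(Nat.not_even_iff_odd.1 hc).neg_one_pow]; ring

theorem evenSum_softParity (τ : ℝ) (c : ι → ℕ) :
    evenSum h (softParity τ c) =
      (1 + τ) / 2 * evenSum h 1 + (1 - τ) / 2 * evenSum h (parityChar c) := by
  rw [← evenSum_add h (g₁ := 1) (fun _ => abs_one.le) (fun X => (abs_parityChar c X).le)]
  refine congrArg _ (funext fun X => ?_)
  rw [softParity_eq, Pi.one_apply, mul_one]

theorem le_evenCondExp_softParity {τ : ℝ} (hτ : τ ≤ 1) (c : ι → ℕ) :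
    (1 + τ) / 2 ≤ evenCondExp h (softParity τ c) := by
  have hZ := evenSum_one_pos h
  have hν := mul_nonneg (by linarith : 0 ≤ (1 - τ) / 2) (evenSum_parityChar_nonneg h c)
  rw [evenCondExp, evenSum_softParity, le_div_iff₀ hZ]
  linarith

variable {κ : Type*} {t : κ → ℝ} (c : κ → ι → ℕ)

theorem abs_parityChar_mul_prod_softParity_le (ht₀ : ∀ x, -1 ≤ t x) (ht₁ : ∀ x, t x ≤ 1)
    (b : ι → ℕ) (F : Finset κ) (X : ι → ℕ) :
    |(parityChar b * ∏ x ∈ F, softParity (t x) (c x)) X| ≤ 1 := by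
  rw [Pi.mul_apply, abs_mul, abs_parityChar, one_mul, prod_apply, abs_prod]
  refine prod_le_one (fun _ _ => abs_nonneg _) fun x _ => ?_
  unfold softParity
  split_ifs
  · simp
  · exact abs_le.2 ⟨ht₀ x, ht₁ x⟩

variable [DecidableEq κ]

theorem evenSum_parityChar_mul_prod_insert (ht₀ : ∀ x, -1 ≤ t x) (ht₁ : ∀ x, t x ≤ 1)
    {x₀ : κ} {F : Finset κ} (hx₀ : x₀ ∉ F) (b : ι → ℕ) :
    evenSum h (parityChar b * ∏ x ∈ insert x₀ F, softParity (t x) (c x)) =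
      (1 + t x₀) / 2 * evenSum h (parityChar b * ∏ x ∈ F, softParity (t x) (c x)) +
      (1 - t x₀) / 2 * evenSum h (parityChar (b + c x₀) * ∏ x ∈ F, softParity (t x) (c x)) := by
  rw [← evenSum_add h (abs_parityChar_mul_prod_softParity_le c ht₀ ht₁ b F)
    (abs_parityChar_mul_prod_softParity_le c ht₀ ht₁ _ F)]
  refine congrArg _ (funext fun X => ?_)
  simp only [Pi.mul_apply, prod_insert hx₀, softParity_eq, parityChar_add]
  ring

/-- The Griffiths inequality extends from characters to products of soft parities, since each
factor is a nonnegative combination of `1` and a character. -/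
theorem evenSum_parityChar_mul_prod_le (hh : ∀ y, 0 ≤ h y) (ht₀ : ∀ x, -1 ≤ t x)
    (ht₁ : ∀ x, t x ≤ 1) (F : Finset κ) (b b' : ι → ℕ) :
    evenSum h (parityChar b') * evenSum h (parityChar b * ∏ x ∈ F, softParity (t x) (c x)) ≤
      evenSum h 1 * evenSum h (parityChar (b + b') * ∏ x ∈ F, softParity (t x) (c x)) := by
  induction F using Finset.induction_on generalizing b with
  | empty =>
    simp only [prod_empty, mul_one]
    linarith [evenSum_parityChar_mul_le h hh b b']
  | insert x₀ F hx₀ ih =>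
    have hα : 0 ≤ (1 + t x₀) / 2 := by linarith [ht₀ x₀]
    have hβ : 0 ≤ (1 - t x₀) / 2 := by linarith [ht₁ x₀]
    rw [evenSum_parityChar_mul_prod_insert h c ht₀ ht₁ hx₀,
      evenSum_parityChar_mul_prod_insert h c ht₀ ht₁ hx₀, add_right_comm b b']
    linarith [mul_le_mul_of_nonneg_left (ih b) hα, mul_le_mul_of_nonneg_left (ih (b + c x₀)) hβ]

theorem evenCondExp_mul_prod_le (hh : ∀ y, 0 ≤ h y) (ht₀ : ∀ x, -1 ≤ t x) (ht₁ : ∀ x, t x ≤ 1)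
    {x₀ : κ} {F : Finset κ} (hx₀ : x₀ ∉ F) :
    evenCondExp h (softParity (t x₀) (c x₀)) * evenCondExp h (∏ x ∈ F, softParity (t x) (c x)) ≤
      evenCondExp h (∏ x ∈ insert x₀ F, softParity (t x) (c x)) := by
  have hZ := evenSum_one_pos h
  have key := evenSum_parityChar_mul_prod_le h c hh ht₀ ht₁ F 0 (c x₀)
  have hins := evenSum_parityChar_mul_prod_insert h c ht₀ ht₁ hx₀ 0
  simp only [parityChar_zero, one_mul, zero_add] at hins key
  rw [evenCondExp, evenCondExp, evenCondExp, evenSum_softParity, hins,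
    div_mul_div_comm, div_le_div_iff₀ (mul_pos hZ hZ) hZ]
  have hβ : 0 ≤ (1 - t x₀) / 2 := by linarith [ht₁ x₀]
  linarith [mul_le_mul_of_nonneg_left (mul_le_mul_of_nonneg_left key hβ) hZ.le]

theorem prod_evenCondExp_le (hh : ∀ y, 0 ≤ h y) (ht₀ : ∀ x, -1 ≤ t x) (ht₁ : ∀ x, t x ≤ 1)
    (F : Finset κ) :
    ∏ x ∈ F, evenCondExp h (softParity (t x) (c x)) ≤
      evenCondExp h (∏ x ∈ F, softParity (t x) (c x)) := by
  induction F using Finset.induction_on with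
  | empty => simp [evenCondExp, (evenSum_one_pos h).ne']
  | insert x₀ F hx₀ ih =>
    rw [prod_insert hx₀]
    have hx₀_nonneg : 0 ≤ evenCondExp h (softParity (t x₀) (c x₀)) :=
      le_trans (by linarith [ht₀ x₀]) (le_evenCondExp_softParity h (ht₁ x₀) (c x₀))
    exact (mul_le_mul_of_nonneg_left ih hx₀_nonneg).trans
      (evenCondExp_mul_prod_le h c hh ht₀ ht₁ hx₀)

end SoftParity

end PoissonParity

open PoissonParity

theorem lsum_eq_sum_mul (N : ℕ) (X : Fin (N + 1) → ℕ) (x : Fin N) :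
    lsum N X x = ∑ y : Fin (N + 1), (if (y : ℕ) ≤ x then 1 else 0) * X y :=
  sum_congr rfl fun y _ => by split_ifs <;> simp

theorem condE_even_eq_evenCondExp (N : ℕ) (h : Fin (N + 1) → ℝ) (g : (Fin (N + 1) → ℕ) → ℝ) :
    condE N h (fun X => Even (∑ y, X y)) g = evenCondExp h g := by
  simp [condE, evenCondExp, evenSum, poisWeight]

theorem fkg_poisson_parities (N : ℕ) (h : Fin (N + 1) → ℝ) (hh : ∀ x, 0 ≤ h x)
    (t : Fin N → ℝ) (ht0 : ∀ x, 0 ≤ t x) (ht1 : ∀ x, t x ≤ 1) :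
    (∏ x : Fin N, condE N h (fun X => Even (∑ y, X y))
        (fun X => if Even (lsum N X x) then 1 else t x)) ≤
      condE N h (fun X => Even (∑ y, X y))
        (fun X => ∏ x : Fin N, if Even (lsum N X x) then 1 else t x) ∧
    (∏ x : Fin N, (1 + t x) / 2) ≤
      ∏ x : Fin N, condE N h (fun X => Even (∑ y, X y))
        (fun X => if Even (lsum N X x) then 1 else t x) := by
  have hf : ∀ x, (fun X => if Even (lsum N X x) then (1 : ℝ) else t x) =
      softParity (t x) fun y : Fin (N + 1) => if (y : ℕ) ≤ x then 1 else 0 := fun x => by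
    ext X
    rw [softParity, lsum_eq_sum_mul]
  have ht₀ : ∀ x, -1 ≤ t x := fun x => by linarith [ht0 x]
  have hF : (fun X => ∏ x : Fin N, if Even (lsum N X x) then (1 : ℝ) else t x) =
      ∏ x, softParity (t x) fun y : Fin (N + 1) => if (y : ℕ) ≤ x then 1 else 0 := by
    ext X
    rw [prod_apply]
    exact prod_congr rfl fun x _ => congrFun (hf x) X
  simp only [condE_even_eq_evenCondExp, hf, hF]
  exact ⟨prod_evenCondExp_le h _ hh ht₀ ht1 univ, prod_le_prod (fun x _ => by linarith [ht0 x])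
    fun x _ => le_evenCondExp_softParity h (ht1 x) _⟩
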